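/- Let β be an even integer and n a natural number with n ≥ β²/4. Then Υ induces a bijection from the set of shift-equivalence classes of symbols of rank n and defect β onto the set 𝒫₂(n − (β/2)²) of bi-partitions of n − β²/4. -/

import Mathlib

/-- A Lusztig symbol: a pair of finite sets of natural numbers (equivalently, a pair of
strictly decreasing finite sequences of natural numbers). -/
structure LSymbol where
  A : Finset ℕ
  B : Finset ℕ

namespace LSymbol

/-- The rank of a symbol: `Σ aᵢ + Σ bⱼ − ⌊((m₁+m₂−1)/2)²⌋`. -/
def rank (Λ : LSymbol) : ℤ :=
  ((Λ.A.sum id + Λ.B.sum id : ℕ) : ℤ) - ((Λ.A.card + Λ.B.card : ℤ) - 1) ^ 2 / 4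

/-- The defect of a symbol: `m₁ − m₂`. -/
def defect (Λ : LSymbol) : ℤ :=
  (Λ.A.card : ℤ) - (Λ.B.card : ℤ)

/-- The shift of a symbol: add 1 to every entry of each row and append a new entry 0. -/
def shift (Λ : LSymbol) : LSymbol :=
  ⟨insert 0 (Λ.A.image (· + 1)), insert 0 (Λ.B.image (· + 1))⟩

/-- Shift-equivalence: the equivalence relation generated by `Λ ∼ shift Λ`. -/
def ShiftEquiv : LSymbol → LSymbol → Prop :=
  Relation.EqvGen fun Λ Λ' => Λ' = Λ.shift

/-- The partition (as a multiset of nonzero parts) attached to one row of a symbol: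
for the row `a₁ > a₂ > … > a_m`, the parts are `aᵢ − (m − i)`, discarding zeros. -/
def rowParts (s : Finset ℕ) : Multiset ℕ :=
  ((((s.sort (· ≤ ·)).zipIdx.map fun p => p.1 - p.2) : Multiset ℕ)).filter (· ≠ 0)

/-- The bi-partition `Υ(Λ)` attached to a symbol. -/
def upsilon (Λ : LSymbol) : Multiset ℕ × Multiset ℕ :=
  (rowParts Λ.A, rowParts Λ.B)

end LSymbol

/-- `μ` is a bi-partition of `N`: an ordered pair of partitions (multisets of positive
natural numbers) whose total size is `N`. -/
def IsBipartitionOf (μ : Multiset ℕ × Multiset ℕ) (N : ℤ) : Prop :=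
  (∀ x ∈ μ.1, 0 < x) ∧ (∀ x ∈ μ.2, 0 < x) ∧ ((μ.1.sum + μ.2.sum : ℕ) : ℤ) = N

/-!
Sort a row increasingly as `a₀ < a₁ < ⋯ < a_{m-1}`. Then `aᵢ - i` is weakly increasing and
its nonzero terms form the partition of the row. In the other direction, `aᵢ = λᵢ + i`, where
`λ` is that partition padded with zeros to length `m`. So a row is determined by its length and
its partition, and every partition with at most `m` parts comes from a row of length `m`.
Shifting a row puts a zero part in front and adds one to its length. Hence shift-equivalent
symbols have the same `Υ`, and if two symbols have the same `Υ` and the same defect, shifting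
the shorter one enough times gives the longer one. Summing `aᵢ = λᵢ + i` gives
`Σ aᵢ = |λ| + m(m-1)/2`. For defect `m₁ - m₂ = 2k`, the two triangular numbers exceed
`⌊((m₁+m₂-1)/2)²⌋` by exactly `k²`, so `rank Λ = |Υ(Λ)| + k²`.
-/

namespace List

def addIndex (q : List ℕ) : List ℕ := q.zipIdx.map fun p => p.1 + p.2

def subIndex (l : List ℕ) : List ℕ := l.zipIdx.map fun p => p.1 - p.2

@[simp] lemma length_addIndex (q : List ℕ) : (addIndex q).length = q.length := by
  simp [addIndex]

@[simp] lemma length_subIndex (l : List ℕ) : (subIndex l).length = l.length := by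
  simp [subIndex]

@[simp] lemma getElem_addIndex (q : List ℕ) (i : ℕ) (h : i < (addIndex q).length) :
    (addIndex q)[i] = q[i]'(by simpa using h) + i := by
  simp [addIndex, getElem_zipIdx]

@[simp] lemma getElem_subIndex (l : List ℕ) (i : ℕ) (h : i < (subIndex l).length) :
    (subIndex l)[i] = l[i]'(by simpa using h) - i := by
  simp [subIndex, getElem_zipIdx]

lemma addIndex_cons (a : ℕ) (q : List ℕ) :
    addIndex (a :: q) = a :: (addIndex q).map (· + 1) := by
  apply ext_getElem (by simp)
  rintro (_ | i) _ _
  · simp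
  · simp; omega

lemma subIndex_addIndex (q : List ℕ) : subIndex (addIndex q) = q :=
  ext_getElem (by simp) fun i _ _ => by simp

lemma getElem_add_sub_le_of_pairwise_lt {l : List ℕ} (hl : l.Pairwise (· < ·)) {i j : ℕ}
    (hij : i ≤ j) (hj : j < l.length) : l[i] + (j - i) ≤ l[j] := by
  obtain ⟨d, rfl⟩ := Nat.exists_eq_add_of_le hij
  induction d with
  | zero => simp
  | succ d ih =>
    have := pairwise_iff_getElem.1 hl (i + d) (i + (d + 1)) (by omega) hj (by omega)
    have := ih (by omega) (by omega)
    simp only [Nat.add_sub_cancel_left] at *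
    omega

lemma le_getElem_of_pairwise_lt {l : List ℕ} (hl : l.Pairwise (· < ·)) {i : ℕ}
    (h : i < l.length) : i ≤ l[i] := by
  have := getElem_add_sub_le_of_pairwise_lt hl (Nat.zero_le i) h
  omega

lemma addIndex_subIndex {l : List ℕ} (hl : l.Pairwise (· < ·)) : addIndex (subIndex l) = l :=
  ext_getElem (by simp) fun i _ h => by
    have := le_getElem_of_pairwise_lt hl h
    simp only [getElem_addIndex, getElem_subIndex]
    omega

lemma pairwise_lt_addIndex {q : List ℕ} (hq : q.Pairwise (· ≤ ·)) :
    (addIndex q).Pairwise (· < ·) := by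
  rw [pairwise_iff_getElem] at hq ⊢
  intro i j hi hj hij
  have := hq i j (by simpa using hi) (by simpa using hj) hij
  simp only [getElem_addIndex]
  omega

lemma pairwise_le_subIndex {l : List ℕ} (hl : l.Pairwise (· < ·)) :
    (subIndex l).Pairwise (· ≤ ·) := by
  rw [pairwise_iff_getElem]
  intro i j hi hj hij
  have := getElem_add_sub_le_of_pairwise_lt hl hij.le (by simpa using hj)
  have := le_getElem_of_pairwise_lt hl (by simpa using hi)
  simp only [getElem_subIndex]
  omega

lemma subIndex_zero_cons_map_succ (l : List ℕ) :
    subIndex (0 :: l.map (· + 1)) = 0 :: subIndex l := by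
  apply ext_getElem (by simp)
  rintro (_ | i) _ _ <;> simp

-- `Σ (qᵢ + i) = Σ qᵢ + m(m-1)/2`, doubled so that no division occurs.
lemma sum_addIndex (q : List ℕ) :
    2 * (addIndex q).sum + q.length = 2 * q.sum + q.length ^ 2 := by
  induction q with
  | nil => simp [addIndex]
  | cons a q ih =>
    simp only [addIndex_cons, sum_cons, sum_map_add, map_const', sum_replicate, length_cons,
      length_addIndex, smul_eq_mul, mul_one, map_id']
    linarith

end List

namespace Multiset

lemma sum_filter_ne_zero {M : Type*} [AddCommMonoid M] [DecidableEq M] (s : Multiset M) :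
    (s.filter (· ≠ 0)).sum = s.sum := by
  conv_rhs => rw [← filter_add_not (· ≠ 0) s]
  rw [sum_add, sum_eq_zero (fun x hx => not_not.1 (mem_filter.1 hx).2), add_zero]

lemma replicate_add_filter_ne_zero {α : Type*} [Zero α] [DecidableEq α] (s : Multiset α) :
    replicate (card s - card (s.filter (· ≠ 0))) 0 + s.filter (· ≠ 0) = s := by
  have hsplit := filter_add_not (· ≠ 0) s
  have hzeros :
      s.filter (fun a => ¬a ≠ 0) = replicate (card s - card (s.filter (· ≠ 0))) 0 := by
    refine eq_replicate.2 ⟨?_, fun b hb => not_not.1 (mem_filter.1 hb).2⟩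
    have := congrArg card hsplit
    rw [card_add] at this
    omega
  rw [← hzeros, add_comm, hsplit]

end Multiset

namespace LSymbol

open List

def shiftRow (s : Finset ℕ) : Finset ℕ := insert 0 (s.image (· + 1))

lemma rowParts_eq_filter (s : Finset ℕ) :
    rowParts s = (subIndex (s.sort (· ≤ ·)) : Multiset ℕ).filter (· ≠ 0) := rfl

lemma pos_of_mem_rowParts {s : Finset ℕ} {x : ℕ} (hx : x ∈ rowParts s) : 0 < x :=
  Nat.pos_of_ne_zero (Multiset.mem_filter.1 hx).2

lemma sum_rowParts (s : Finset ℕ) :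
    2 * s.sum id + s.card = 2 * (rowParts s).sum + s.card ^ 2 := by
  set l := s.sort (· ≤ ·)
  have hl : l.sum = s.sum id := by
    rw [Finset.sum_eq_multiset_sum, Multiset.map_id, ← Finset.sort_eq s (· ≤ ·),
      Multiset.sum_coe]
  calc 2 * s.sum id + s.card = 2 * (addIndex (subIndex l)).sum + (subIndex l).length := by
        rw [addIndex_subIndex (Finset.sortedLT_sort s).pairwise, hl, length_subIndex,
          Finset.length_sort]
    _ = 2 * (subIndex l).sum + (subIndex l).length ^ 2 := sum_addIndex _
    _ = 2 * (rowParts s).sum + s.card ^ 2 := by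
        rw [rowParts_eq_filter, Multiset.sum_filter_ne_zero, Multiset.sum_coe, length_subIndex,
          Finset.length_sort]

lemma sort_shiftRow (s : Finset ℕ) :
    (shiftRow s).sort (· ≤ ·) = 0 :: (s.sort (· ≤ ·)).map (· + 1) := by
  rw [shiftRow, Finset.sort_insert _ (fun _ _ => Nat.zero_le _) (by simp)]
  congr 1
  have h := Finset.map_sort (addRightEmbedding 1) s (· ≤ ·) (· ≤ ·) (fun a _ b _ => by simp)
  rw [Finset.map_eq_image] at h
  exact h.symm

lemma card_shiftRow (s : Finset ℕ) : (shiftRow s).card = s.card + 1 := by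
  rw [shiftRow, Finset.card_insert_of_notMem (by simp),
    Finset.card_image_of_injective _ (add_left_injective 1)]

lemma rowParts_shiftRow (s : Finset ℕ) : rowParts (shiftRow s) = rowParts s := by
  rw [rowParts_eq_filter, sort_shiftRow, subIndex_zero_cons_map_succ, ← Multiset.cons_coe,
    Multiset.filter_cons_of_neg _ (by simp), rowParts_eq_filter]

def padZeros (μ : Multiset ℕ) (m : ℕ) : List ℕ :=
  replicate (m - Multiset.card μ) 0 ++ μ.sort (· ≤ ·)

def rowOfParts (μ : Multiset ℕ) (m : ℕ) : Finset ℕ := (addIndex (padZeros μ m)).toFinset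

lemma pairwise_le_padZeros (μ : Multiset ℕ) (m : ℕ) : (padZeros μ m).Pairwise (· ≤ ·) :=
  pairwise_append.2 ⟨pairwise_replicate.2 (Or.inr le_rfl), Multiset.pairwise_sort _ _,
    fun _ hx _ _ => (eq_of_mem_replicate hx).trans_le (Nat.zero_le _)⟩

lemma coe_padZeros (μ : Multiset ℕ) (m : ℕ) :
    (padZeros μ m : Multiset ℕ) = Multiset.replicate (m - Multiset.card μ) 0 + μ := by
  rw [padZeros, ← Multiset.coe_add, Multiset.coe_replicate, Multiset.sort_eq]

lemma sort_rowOfParts (μ : Multiset ℕ) (m : ℕ) :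
    (rowOfParts μ m).sort (· ≤ ·) = addIndex (padZeros μ m) :=
  have h := pairwise_lt_addIndex (pairwise_le_padZeros μ m)
  (List.toFinset_sort _ h.nodup).2 (h.imp le_of_lt)

lemma card_rowOfParts {μ : Multiset ℕ} {m : ℕ} (h : Multiset.card μ ≤ m) :
    (rowOfParts μ m).card = m := by
  rw [← Finset.length_sort (· ≤ ·), sort_rowOfParts, length_addIndex, padZeros, length_append,
    length_replicate, Multiset.length_sort]
  omega

lemma rowParts_rowOfParts {μ : Multiset ℕ} (hμ : ∀ x ∈ μ, 0 < x) (m : ℕ) :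
    rowParts (rowOfParts μ m) = μ := by
  rw [rowParts_eq_filter, sort_rowOfParts, subIndex_addIndex, coe_padZeros, Multiset.filter_add,
    Multiset.filter_eq_nil.2 (fun a ha => by simp [Multiset.eq_of_mem_replicate ha]),
    Multiset.filter_eq_self.2 (fun a ha => (hμ a ha).ne'), zero_add]

lemma padZeros_rowParts (s : Finset ℕ) :
    padZeros (rowParts s) s.card = subIndex (s.sort (· ≤ ·)) := by
  refine Perm.eq_of_pairwise' (pairwise_le_padZeros _ _)
    (pairwise_le_subIndex (Finset.sortedLT_sort s).pairwise) (Multiset.coe_eq_coe.1 ?_)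
  rw [coe_padZeros, rowParts_eq_filter]
  simpa using Multiset.replicate_add_filter_ne_zero (subIndex (s.sort (· ≤ ·)) : Multiset ℕ)

lemma rowOfParts_rowParts (s : Finset ℕ) : rowOfParts (rowParts s) s.card = s := by
  rw [rowOfParts, padZeros_rowParts, addIndex_subIndex (Finset.sortedLT_sort s).pairwise,
    Finset.sort_toFinset]

lemma eq_of_rowParts_eq {s t : Finset ℕ} (hc : s.card = t.card)
    (hp : rowParts s = rowParts t) : s = t := by
  rw [← rowOfParts_rowParts s, ← rowOfParts_rowParts t, hp, hc]

lemma card_shift_A (Λ : LSymbol) : Λ.shift.A.card = Λ.A.card + 1 := card_shiftRow Λ.A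

lemma card_shift_B (Λ : LSymbol) : Λ.shift.B.card = Λ.B.card + 1 := card_shiftRow Λ.B

lemma upsilon_shift (Λ : LSymbol) : Λ.shift.upsilon = Λ.upsilon :=
  Prod.ext (rowParts_shiftRow Λ.A) (rowParts_shiftRow Λ.B)

lemma upsilon_eq_of_shiftEquiv {Λ Λ' : LSymbol} (h : ShiftEquiv Λ Λ') :
    Λ.upsilon = Λ'.upsilon := by
  induction h with
  | rel _ _ h => rw [h, upsilon_shift]
  | refl => rfl
  | symm _ _ _ ih => exact ih.symm
  | trans _ _ _ _ _ ih₁ ih₂ => exact ih₁.trans ih₂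

lemma eq_of_upsilon_eq {Λ Λ' : LSymbol} (hu : Λ.upsilon = Λ'.upsilon)
    (hA : Λ.A.card = Λ'.A.card) (hB : Λ.B.card = Λ'.B.card) : Λ = Λ' := by
  obtain ⟨hpA, hpB⟩ := Prod.ext_iff.1 hu
  obtain ⟨A, B⟩ := Λ
  obtain ⟨A', B'⟩ := Λ'
  exact congrArg₂ mk (eq_of_rowParts_eq hA hpA) (eq_of_rowParts_eq hB hpB)

lemma shiftEquiv_of_upsilon_eq_of_card_eq_add {Λ Λ' : LSymbol} (d : ℕ)
    (hu : Λ.upsilon = Λ'.upsilon) (hA : Λ'.A.card = Λ.A.card + d)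
    (hB : Λ'.B.card = Λ.B.card + d) : ShiftEquiv Λ Λ' := by
  induction d generalizing Λ with
  | zero => exact eq_of_upsilon_eq hu hA.symm hB.symm ▸ Relation.EqvGen.refl Λ
  | succ d ih =>
    refine Relation.EqvGen.trans _ Λ.shift _ (Relation.EqvGen.rel _ _ rfl) (ih ?_ ?_ ?_)
    · rw [upsilon_shift, hu]
    · rw [hA, card_shift_A]; ring
    · rw [hB, card_shift_B]; ring

lemma shiftEquiv_iff_upsilon_eq {Λ Λ' : LSymbol} (hd : Λ.defect = Λ'.defect) :
    ShiftEquiv Λ Λ' ↔ Λ.upsilon = Λ'.upsilon := by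
  refine ⟨upsilon_eq_of_shiftEquiv, fun hu => ?_⟩
  unfold defect at hd
  rcases le_total Λ.A.card Λ'.A.card with h | h
  · obtain ⟨d, hA⟩ := Nat.exists_eq_add_of_le h
    exact shiftEquiv_of_upsilon_eq_of_card_eq_add d hu hA (by omega)
  · obtain ⟨d, hA⟩ := Nat.exists_eq_add_of_le h
    exact Relation.EqvGen.symm _ _
      (shiftEquiv_of_upsilon_eq_of_card_eq_add d hu.symm hA (by omega))

lemma rank_eq_of_defect_eq_two_mul {Λ : LSymbol} {k : ℤ} (hk : Λ.defect = 2 * k) :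
    Λ.rank = ((Λ.upsilon.1.sum + Λ.upsilon.2.sum : ℕ) : ℤ) + k ^ 2 := by
  have hA : (2 * Λ.A.sum id + Λ.A.card : ℤ) = 2 * (rowParts Λ.A).sum + Λ.A.card ^ 2 := by
    exact_mod_cast sum_rowParts Λ.A
  have hB : (2 * Λ.B.sum id + Λ.B.card : ℤ) = 2 * (rowParts Λ.B).sum + Λ.B.card ^ 2 := by
    exact_mod_cast sum_rowParts Λ.B
  unfold defect at hk
  have key : ((Λ.A.card + Λ.B.card : ℤ) - 1) ^ 2 = 4 * ((Λ.A.sum id + Λ.B.sum id : ℤ) -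
      (rowParts Λ.A).sum - (rowParts Λ.B).sum - k ^ 2) + 1 := by
    linear_combination (-2) * hA - 2 * hB - (Λ.A.card - Λ.B.card + 2 * k : ℤ) * hk
  rw [rank, key, upsilon]
  push_cast
  omega

lemma exists_defect_eq_upsilon_eq (β : ℤ) {μ : Multiset ℕ × Multiset ℕ}
    (h₁ : ∀ x ∈ μ.1, 0 < x) (h₂ : ∀ x ∈ μ.2, 0 < x) :
    ∃ Λ : LSymbol, Λ.defect = β ∧ Λ.upsilon = μ := by
  set t := Multiset.card μ.1 + Multiset.card μ.2
  refine ⟨⟨rowOfParts μ.1 (t + β.toNat), rowOfParts μ.2 (t + (-β).toNat)⟩, ?_,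
    Prod.ext (rowParts_rowOfParts h₁ _) (rowParts_rowOfParts h₂ _)⟩
  rw [defect, card_rowOfParts (by omega), card_rowOfParts (by omega)]
  omega

end LSymbol

theorem statement3_general (β : ℤ) (hβ : Even β) (n : ℕ) :
    (∀ Λ : LSymbol, Λ.rank = n → Λ.defect = β →
      IsBipartitionOf Λ.upsilon ((n : ℤ) - (β / 2) ^ 2)) ∧
    (∀ Λ Λ' : LSymbol, Λ.rank = n → Λ.defect = β → Λ'.rank = n → Λ'.defect = β →
      (Λ.upsilon = Λ'.upsilon ↔ LSymbol.ShiftEquiv Λ Λ')) ∧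
    (∀ μ : Multiset ℕ × Multiset ℕ,
      IsBipartitionOf μ ((n : ℤ) - (β / 2) ^ 2) →
      ∃ Λ : LSymbol, Λ.rank = n ∧ Λ.defect = β ∧ Λ.upsilon = μ) := by
  obtain ⟨k, rfl⟩ := hβ
  have hrank (Λ : LSymbol) (hΛ : Λ.defect = k + k) :=
    LSymbol.rank_eq_of_defect_eq_two_mul (hΛ.trans (two_mul k).symm)
  rw [show (k + k) / 2 = k by omega]
  refine ⟨fun Λ hr hd =>
      ⟨fun _ => LSymbol.pos_of_mem_rowParts, fun _ => LSymbol.pos_of_mem_rowParts, ?_⟩,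
    fun Λ Λ' _ hd _ hd' => (LSymbol.shiftEquiv_iff_upsilon_eq (hd.trans hd'.symm)).symm,
    fun μ ⟨h₁, h₂, hsum⟩ => ?_⟩
  · linarith [hrank Λ hd]
  · obtain ⟨Λ, hd, hu⟩ := LSymbol.exists_defect_eq_upsilon_eq (k + k) h₁ h₂
    exact ⟨Λ, by rw [hrank Λ hd, hu, hsum]; ring, hd, hu⟩

/-- For even `β` and `n ≥ β²/4`, the map `Υ` induces a bijection from the set of
shift-equivalence classes of symbols of rank `n` and defect `β` onto the set
`𝒫₂(n − (β/2)²)` of bi-partitions: `Υ` lands in that set, two symbols of rank `n` and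
defect `β` have the same image iff they are shift-equivalent, and every such
bi-partition is attained. -/
theorem statement3 (β : ℤ) (hβ : Even β) (n : ℕ) (hn : (β / 2) ^ 2 ≤ (n : ℤ)) :
    (∀ Λ : LSymbol, Λ.rank = n → Λ.defect = β →
      IsBipartitionOf Λ.upsilon ((n : ℤ) - (β / 2) ^ 2)) ∧
    (∀ Λ Λ' : LSymbol, Λ.rank = n → Λ.defect = β → Λ'.rank = n → Λ'.defect = β →
      (Λ.upsilon = Λ'.upsilon ↔ LSymbol.ShiftEquiv Λ Λ')) ∧
    (∀ μ : Multiset ℕ × Multiset ℕ,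
      IsBipartitionOf μ ((n : ℤ) - (β / 2) ^ 2) →
      ∃ Λ : LSymbol, Λ.rank = n ∧ Λ.defect = β ∧ Λ.upsilon = μ) :=
  statement3_general β hβ n
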